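/- arXiv:1609.02513 — 5 statements merged into one kernel-verified Lean document; each statement's English description precedes it below -/
import Mathlib

section
/- For any weight u on a finite set X, there exists a maximal ultrametric below u: the pointwise supremum of all ultrametrics pointwise bounded by u is itself an ultrametric bounded by u, and it dominates every ultrametric bounded by u. -/
def IsWeight {X : Type*} (u : X → X → ℝ) : Prop :=
  (∀ x y, 0 ≤ u x y) ∧ (∀ x y, u x y = u y x) ∧ (∀ x, u x x = 0)

def IsUltrametric {X : Type*} (u : X → X → ℝ) : Prop :=
  (∀ x y, 0 ≤ u x y) ∧ (∀ x y, u x y = u y x) ∧ (∀ x, u x x = 0) ∧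
    (∀ x y z, u x z ≤ max (u x y) (u y z))

theorem maximal_subdominant_ultrametric {X : Type*} [Fintype X]
    (u : X → X → ℝ) (hu : IsWeight u) :
    IsUltrametric (fun x y =>
        sSup ((fun d => d x y) '' {d | IsUltrametric d ∧ ∀ a b, d a b ≤ u a b})) ∧
      (∀ x y,
        sSup ((fun d => d x y) '' {d | IsUltrametric d ∧ ∀ a b, d a b ≤ u a b}) ≤ u x y) ∧
      (∀ d, IsUltrametric d → (∀ a b, d a b ≤ u a b) →
        ∀ x y, d x y ≤
          sSup ((fun d => d x y) '' {d | IsUltrametric d ∧ ∀ a b, d a b ≤ u a b})) := by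
  obtain ⟨hu0, husym, hudiag⟩ := hu
  set S : Set (X → X → ℝ) := {d | IsUltrametric d ∧ ∀ a b, d a b ≤ u a b} with hS
  have hzero : (fun _ _ => (0:ℝ)) ∈ S := by
    refine ⟨⟨fun _ _ => le_refl 0, fun _ _ => rfl, fun _ => rfl, fun _ _ _ => ?_⟩,
      fun a b => hu0 a b⟩
    simp
  have hne : ∀ x y, ((fun d => d x y) '' S).Nonempty := fun x y =>
    ⟨0, ⟨_, hzero, rfl⟩⟩
  have hbdd : ∀ x y, ∀ r ∈ (fun d => d x y) '' S, r ≤ u x y := by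
    rintro x y r ⟨d, hd, rfl⟩
    exact hd.2 x y
  have hBdd : ∀ x y, BddAbove ((fun d => d x y) '' S) := fun x y =>
    ⟨u x y, fun r hr => hbdd x y r hr⟩
  have hle : ∀ x y, sSup ((fun d => d x y) '' S) ≤ u x y := fun x y =>
    Real.sSup_le (hbdd x y) (hu0 x y)
  have hnonneg : ∀ x y, 0 ≤ sSup ((fun d => d x y) '' S) := fun x y =>
    le_csSup (hBdd x y) ⟨_, hzero, rfl⟩
  have hsym : ∀ x y, ((fun d => d x y) '' S) = ((fun d => d y x) '' S) := by
    intro x y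
    ext r
    constructor
    · rintro ⟨d, hd, rfl⟩; exact ⟨d, hd, hd.1.2.1 y x⟩
    · rintro ⟨d, hd, rfl⟩; exact ⟨d, hd, hd.1.2.1 x y⟩
  refine ⟨⟨hnonneg, fun x y => by dsimp only; rw [hsym x y], fun x => ?_, fun x y z => ?_⟩,
    hle, ?_⟩
  · have : ((fun d => d x x) '' S) = {0} := by
      apply Set.eq_singleton_iff_nonempty_unique_mem.mpr
      refine ⟨hne x x, ?_⟩
      rintro r ⟨d, hd, rfl⟩
      exact hd.1.2.2.1 x
    simp [this]
  · apply Real.sSup_le _ (le_trans (hnonneg x y) (le_max_left _ _))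
    rintro r ⟨d, hd, rfl⟩
    calc d x z ≤ max (d x y) (d y z) := hd.1.2.2.2 x y z
      _ ≤ _ := max_le_max (le_csSup (hBdd x y) ⟨d, hd, rfl⟩)
          (le_csSup (hBdd y z) ⟨d, hd, rfl⟩)
  · intro d hd hdu x y
    exact le_csSup (hBdd x y) ⟨d, ⟨hd, hdu⟩, rfl⟩
end

section
/- The weight E_u is an ultrametric: for a finite weight space (X,u), the function E_u(x₁,x₂) = max over bipartitions {A, Aᶜ} of X separating x₁ and x₂ of min{u(y₁,y₂) : y₁ ∈ A, y₂ ∈ Aᶜ} satisfies the ultrametric inequality E_u(x₁,x₃) ≤ max(E_u(x₁,x₂), E_u(x₂,x₃)). -/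
/-- The minimal `u`-distance across the bipartition `{A, Aᶜ}`. -/
noncomputable def crossDist {X : Type*} (u : X → X → ℝ) (A : Set X) : ℝ :=
  sInf {s : ℝ | ∃ y₁ ∈ A, ∃ y₂ ∉ A, s = u y₁ y₂}

/-- The single-linkage weight: the maximal, over bipartitions separating
`x₁` from `x₂`, minimal cross-distance; `0` on the diagonal. -/
noncomputable def Ebi {X : Type*} [DecidableEq X] (u : X → X → ℝ) (x₁ x₂ : X) : ℝ :=
  if x₁ = x₂ then 0
  else sSup {r : ℝ | ∃ A : Set X, x₁ ∈ A ∧ x₂ ∉ A ∧ r = crossDist u A}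

lemma crossDist_nonneg {X : Type*} (u : X → X → ℝ) (hu : IsWeight u) (A : Set X) :
    0 ≤ crossDist u A := by
  apply Real.sInf_nonneg
  rintro x ⟨y₁, _, y₂, _, rfl⟩
  exact hu.1 y₁ y₂

lemma crossDist_le {X : Type*} (u : X → X → ℝ) (hu : IsWeight u) {A : Set X}
    {a b : X} (ha : a ∈ A) (hb : b ∉ A) : crossDist u A ≤ u a b := by
  apply csInf_le
  · exact ⟨0, by rintro x ⟨y₁, _, y₂, _, rfl⟩; exact hu.1 y₁ y₂⟩
  · exact ⟨a, ha, b, hb, rfl⟩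

lemma bddAbove_Ebi_set {X : Type*} (u : X → X → ℝ) (hu : IsWeight u) (x₁ x₂ : X) :
    BddAbove {r : ℝ | ∃ A : Set X, x₁ ∈ A ∧ x₂ ∉ A ∧ r = crossDist u A} := by
  refine ⟨u x₁ x₂, ?_⟩
  rintro r ⟨A, h₁, h₂, rfl⟩
  exact crossDist_le u hu h₁ h₂

lemma Ebi_nonneg {X : Type*} [DecidableEq X] (u : X → X → ℝ) (hu : IsWeight u) (x₁ x₂ : X) :
    0 ≤ Ebi u x₁ x₂ := by
  unfold Ebi
  split
  · exact le_refl 0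
  · rename_i h
    calc (0:ℝ) ≤ crossDist u {x₁} := crossDist_nonneg u hu _
    _ ≤ _ := le_csSup (bddAbove_Ebi_set u hu x₁ x₂)
        ⟨{x₁}, rfl, by simpa using Ne.symm h, rfl⟩

lemma le_Ebi {X : Type*} [DecidableEq X] (u : X → X → ℝ) (hu : IsWeight u)
    {x₁ x₂ : X} (h : x₁ ≠ x₂) {A : Set X} (h₁ : x₁ ∈ A) (h₂ : x₂ ∉ A) :
    crossDist u A ≤ Ebi u x₁ x₂ := by
  unfold Ebi
  rw [if_neg h]
  exact le_csSup (bddAbove_Ebi_set u hu x₁ x₂) ⟨A, h₁, h₂, rfl⟩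

theorem Ebi_ultrametric_ineq {X : Type*} [Fintype X] [DecidableEq X]
    (u : X → X → ℝ) (hu : IsWeight u) (x₁ x₂ x₃ : X) :
    Ebi u x₁ x₃ ≤ max (Ebi u x₁ x₂) (Ebi u x₂ x₃) := by
  have hmax : (0:ℝ) ≤ max (Ebi u x₁ x₂) (Ebi u x₂ x₃) :=
    le_trans (Ebi_nonneg u hu x₁ x₂) (le_max_left _ _)
  unfold Ebi
  split
  · exact hmax
  · apply Real.sSup_le _ hmax
    rintro r ⟨A, h₁, h₃, rfl⟩
    by_cases h₂ : x₂ ∈ A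
    · refine le_trans (le_Ebi u hu ?_ h₂ h₃) (le_max_right _ _)
      rintro rfl; exact h₃ h₂
    · refine le_trans (le_Ebi u hu ?_ h₁ h₂) (le_max_left _ _)
      rintro rfl; exact h₂ h₁
end

section
/- The single-linkage functor is functorial: if f : (X,u) → (Y,v) is a non-expansive map of finite weight spaces, then E_u(x₁,x₂) ≥ E_v(f(x₁), f(x₂)) for all x₁, x₂ ∈ X, where E_u(x₁,x₂) = max over subsets A separating x₁ from x₂ of the minimal u-distance across the bipartition (and E_u(x,x)=0). -/
lemma crossSetBdd {X : Type*} [Fintype X] (u : X → X → ℝ) (x₁ x₂ : X) :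
    BddAbove {r : ℝ | ∃ A : Set X, x₁ ∈ A ∧ x₂ ∉ A ∧ r = crossDist u A} := by
  have hfin : ({r : ℝ | ∃ A : Set X, x₁ ∈ A ∧ x₂ ∉ A ∧ r = crossDist u A}).Finite := by
    apply Set.Finite.subset (Set.finite_range (crossDist u))
    rintro r ⟨A, _, _, rfl⟩
    exact ⟨A, rfl⟩
  exact hfin.bddAbove

theorem Ebi_functorial {X Y : Type*} [Fintype X] [Fintype Y]
    [DecidableEq X] [DecidableEq Y]
    (u : X → X → ℝ) (v : Y → Y → ℝ) (hu : IsWeight u) (hv : IsWeight v)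
    (f : X → Y) (hf : ∀ x x', v (f x) (f x') ≤ u x x') :
    ∀ x₁ x₂ : X, Ebi v (f x₁) (f x₂) ≤ Ebi u x₁ x₂ := by
  intro x₁ x₂
  by_cases hx : x₁ = x₂
  · subst hx
    simp [Ebi]
  · unfold Ebi
    rw [if_neg hx]
    by_cases hfx : f x₁ = f x₂
    · rw [if_pos hfx]
      have hmem : crossDist u {x₁} ∈
          {r : ℝ | ∃ A : Set X, x₁ ∈ A ∧ x₂ ∉ A ∧ r = crossDist u A} :=
        ⟨{x₁}, rfl, by simpa using Ne.symm hx, rfl⟩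
      exact le_trans (crossDist_nonneg u hu _) (le_csSup (crossSetBdd u x₁ x₂) hmem)
    · rw [if_neg hfx]
      apply Real.sSup_le _ (by
        have hmem : crossDist u {x₁} ∈
            {r : ℝ | ∃ A : Set X, x₁ ∈ A ∧ x₂ ∉ A ∧ r = crossDist u A} :=
          ⟨{x₁}, rfl, by simpa using Ne.symm hx, rfl⟩
        exact le_trans (crossDist_nonneg u hu _) (le_csSup (crossSetBdd u x₁ x₂) hmem))
      rintro r ⟨B, hB₁, hB₂, rfl⟩
      have key : crossDist v B ≤ crossDist u (f ⁻¹' B) := by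
        unfold crossDist
        refine le_csInf ⟨u x₁ x₂, ⟨x₁, hB₁, x₂, hB₂, rfl⟩⟩ ?_
        rintro s ⟨y₁, hy₁, y₂, hy₂, rfl⟩
        calc sInf {s : ℝ | ∃ y₁ ∈ B, ∃ y₂ ∉ B, s = v y₁ y₂} ≤ v (f y₁) (f y₂) :=
              csInf_le ⟨0, by rintro t ⟨z₁, _, z₂, _, rfl⟩; exact hv.1 z₁ z₂⟩
                ⟨f y₁, hy₁, f y₂, hy₂, rfl⟩
          _ ≤ u y₁ y₂ := hf y₁ y₂
      exact key.trans (le_csSup (crossSetBdd u x₁ x₂) ⟨f ⁻¹' B, hB₁, hB₂, rfl⟩)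
end

section
/- The category of cut metrics is not max-closed: there exist a 5-point set X and two metrics d₀, d₁ on X, each a nonnegative combination of cut pseudometrics, such that the pointwise maximum d = max(d₀, d₁) is a metric that is not expressible as a nonnegative combination of cut pseudometrics. Specifically, with X = {1,...,5} and d the path metric of the complete bipartite graph K_{2,3} with parts {1,5} and {2,3,4} (unit edge lengths), d is not a cut metric while d₀ = δ_{{2}} + δ_{{3}} + δ_{{4}} and d₁ = (1/3)(δ_{{1,2}} + δ_{{1,3}} + δ_{{1,4}} + δ_{{2,5}} + δ_{{3,5}} + δ_{{4,5}}) are cut metrics with max(d₀,d₁) = d. -/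
open Classical in
/-- The cut pseudometric associated to a subset `A`. -/
noncomputable def cutPM {X : Type*} (A : Set X) : X → X → ℝ :=
  fun x y => if (x ∈ A ↔ y ∈ A) then 0 else 1

/-- A weight is a cut metric if it is a finite nonnegative combination of cut
pseudometrics. -/
def IsCutMetric {X : Type*} (d : X → X → ℝ) : Prop :=
  ∃ (n : ℕ) (A : Fin n → Set X) (c : Fin n → ℝ), (∀ i, 0 ≤ c i) ∧
    ∀ x y, d x y = ∑ i, c i * cutPM (A i) x y

/-- The path metric of `K₂,₃` with parts `{0,4}` and `{1,2,3}` (unit edges). -/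
def dK23 : Fin 5 → Fin 5 → ℝ := fun x y =>
  if x = y then 0
  else if (x = 0 ∧ y = 4) ∨ (x = 4 ∧ y = 0) then 2
  else if x ≠ 0 ∧ x ≠ 4 ∧ y ≠ 0 ∧ y ≠ 4 then 2
  else 1

noncomputable def d0 : Fin 5 → Fin 5 → ℝ := fun x y =>
  cutPM {1} x y + cutPM {2} x y + cutPM {3} x y

noncomputable def d1 : Fin 5 → Fin 5 → ℝ := fun x y =>
  (1 / 3 : ℝ) * (cutPM {0, 1} x y + cutPM {0, 2} x y + cutPM {0, 3} x y +
    cutPM {1, 4} x y + cutPM {2, 4} x y + cutPM {3, 4} x y)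

/-- Cut family witnessing that `d0` is a cut metric. -/
def cutsA0 : Fin 3 → Set (Fin 5)
  | 0 => {1} | 1 => {2} | 2 => {3}

/-- Cut family witnessing that `d1` is a cut metric. -/
def cutsA1 : Fin 6 → Set (Fin 5)
  | 0 => {0, 1} | 1 => {0, 2} | 2 => {0, 3}
  | 3 => {1, 4} | 4 => {2, 4} | 5 => {3, 4}

/-- The pentagonal inequality for an arbitrary cut pseudometric on `Fin 5`,
with the triple `{1,2,3}` against the pair `{0,4}`. -/
lemma pent (A : Set (Fin 5)) :
    cutPM A 1 2 + cutPM A 1 3 + cutPM A 2 3 + cutPM A 0 4 ≤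
    cutPM A 0 1 + cutPM A 0 2 + cutPM A 0 3 + cutPM A 4 1 + cutPM A 4 2 + cutPM A 4 3 := by
  by_cases h0 : (0:Fin 5) ∈ A <;> by_cases h1 : (1:Fin 5) ∈ A <;>
    by_cases h2 : (2:Fin 5) ∈ A <;> by_cases h3 : (3:Fin 5) ∈ A <;>
    by_cases h4 : (4:Fin 5) ∈ A <;> simp [cutPM, h0, h1, h2, h3, h4] <;> norm_num

set_option maxHeartbeats 2000000 in
theorem cut_metrics_not_max_closed :
    IsCutMetric d0 ∧ IsCutMetric d1 ∧
      (∀ x y, dK23 x y = max (d0 x y) (d1 x y)) ∧ ¬ IsCutMetric dK23 := by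
  refine ⟨⟨3, cutsA0, fun _ => 1, fun _ => zero_le_one, fun x y => ?_⟩,
    ⟨6, cutsA1, fun _ => 1/3, fun _ => by norm_num, fun x y => ?_⟩,
    fun x y => ?_, ?_⟩
  · simp [d0, Fin.sum_univ_three, show cutsA0 0 = {1} from rfl,
      show cutsA0 1 = {2} from rfl, show cutsA0 2 = {3} from rfl]
  · simp only [Fin.sum_univ_six, show cutsA1 0 = {0,1} from rfl,
      show cutsA1 1 = {0,2} from rfl, show cutsA1 2 = {0,3} from rfl,
      show cutsA1 3 = {1,4} from rfl, show cutsA1 4 = {2,4} from rfl,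
      show cutsA1 5 = {3,4} from rfl, d1]
    ring
  · fin_cases x <;> fin_cases y <;>
      simp (config := { decide := true }) only [dK23, d0, d1, cutPM,
        Set.mem_insert_iff, Set.mem_singleton_iff] <;>
      norm_num [max_def]
  · rintro ⟨n, A, c, hc, hd⟩
    have h : (8:ℝ) ≤ 6 := by
      calc (8:ℝ) = dK23 1 2 + dK23 1 3 + dK23 2 3 + dK23 0 4 := by
            simp (config := { decide := true }) only [dK23]; norm_num
        _ = ∑ i, c i * (cutPM (A i) 1 2 + cutPM (A i) 1 3 + cutPM (A i) 2 3 +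
              cutPM (A i) 0 4) := by
            rw [hd 1 2, hd 1 3, hd 2 3, hd 0 4, ← Finset.sum_add_distrib,
              ← Finset.sum_add_distrib, ← Finset.sum_add_distrib]
            exact Finset.sum_congr rfl fun i _ => by ring
        _ ≤ ∑ i, c i * (cutPM (A i) 0 1 + cutPM (A i) 0 2 + cutPM (A i) 0 3 +
              cutPM (A i) 4 1 + cutPM (A i) 4 2 + cutPM (A i) 4 3) :=
            Finset.sum_le_sum fun i _ =>
              mul_le_mul_of_nonneg_left (pent (A i)) (hc i)
        _ = dK23 0 1 + dK23 0 2 + dK23 0 3 + dK23 4 1 + dK23 4 2 + dK23 4 3 := by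
            rw [hd 0 1, hd 0 2, hd 0 3, hd 4 1, hd 4 2, hd 4 3, ← Finset.sum_add_distrib,
              ← Finset.sum_add_distrib, ← Finset.sum_add_distrib, ← Finset.sum_add_distrib,
              ← Finset.sum_add_distrib]
            exact Finset.sum_congr rfl fun i _ => by ring
        _ = 6 := by simp (config := { decide := true }) only [dK23]; norm_num
    linarith
end

section
/- Every m-point-antipodal space of cardinality at least m is antipodal, and being A_m implies being A_n for n ≥ m: if (X,d) is a finite metric space in which every subset of cardinality m is an antipodal space (every point of the subset has a point of the subset at distance equal to the subset's diameter), then every subset of cardinality n ≥ m is also antipodal; in particular if |X| ≥ m then X itself is antipodal. -/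
def IsMetric {X : Type*} (d : X → X → ℝ) : Prop :=
  (∀ x y, 0 ≤ d x y) ∧ (∀ x y, d x y = d y x) ∧ (∀ x, d x x = 0) ∧
    (∀ x y z, d x z ≤ d x y + d y z)

/-- Diameter of a finite subset. -/
noncomputable def diamS {X : Type*} (d : X → X → ℝ) (S : Finset X) : ℝ :=
  sSup {r : ℝ | ∃ a ∈ S, ∃ b ∈ S, r = d a b}

/-- `S` is antipodal: every point of `S` has a point of `S` at distance
equal to the diameter of `S`. -/
def AntipodalOn {X : Type*} (d : X → X → ℝ) (S : Finset X) : Prop :=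
  ∀ a ∈ S, ∃ b ∈ S, d a b = diamS d S

/-!
A diametral pair `x, y` of `S` together with any point `a ∈ S` spans at most three points, so
they fit in an `m`-subset `T ⊆ S` as soon as `3 ≤ m ≤ |S|`. Then `diam T = diam S`, and an
antipode of `a` in `T` is an antipode of `a` in `S`.
-/

section Diameter

variable {X : Type*} (d : X → X → ℝ)

lemma diamS_set_finite (S : Finset X) : {r : ℝ | ∃ a ∈ S, ∃ b ∈ S, r = d a b}.Finite :=
  (S.finite_toSet.image2 d S.finite_toSet).subset
    fun _ ⟨a, ha, b, hb, hr⟩ => ⟨a, ha, b, hb, hr.symm⟩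

lemma exists_dist_eq_diamS {S : Finset X} (hS : S.Nonempty) :
    ∃ x ∈ S, ∃ y ∈ S, d x y = diamS d S := by
  obtain ⟨x, hx⟩ := hS
  have hne : {r : ℝ | ∃ a ∈ S, ∃ b ∈ S, r = d a b}.Nonempty := ⟨d x x, x, hx, x, hx, rfl⟩
  obtain ⟨a, ha, b, hb, hab⟩ := hne.csSup_mem (diamS_set_finite d S)
  exact ⟨a, ha, b, hb, hab.symm⟩

lemma le_diamS {S : Finset X} {a b : X} (ha : a ∈ S) (hb : b ∈ S) : d a b ≤ diamS d S :=
  le_csSup (diamS_set_finite d S).bddAbove ⟨a, ha, b, hb, rfl⟩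

lemma diamS_mono {T S : Finset X} (hTS : T ⊆ S) (hT : T.Nonempty) : diamS d T ≤ diamS d S := by
  obtain ⟨x, hx⟩ := hT
  refine csSup_le ⟨d x x, x, hx, x, hx, rfl⟩ ?_
  rintro r ⟨a, ha, b, hb, rfl⟩
  exact le_diamS d (hTS ha) (hTS hb)

lemma diamS_eq_of_subset_of_dist_eq {T S : Finset X} (hTS : T ⊆ S) {x y : X} (hx : x ∈ T)
    (hy : y ∈ T) (hxy : d x y = diamS d S) : diamS d T = diamS d S :=
  le_antisymm (diamS_mono d hTS ⟨x, hx⟩) (hxy ▸ le_diamS d hx hy)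

end Diameter

lemma antipodalOn_of_card_le {X : Type*} {d : X → X → ℝ} {m : ℕ} (hm : 3 ≤ m)
    (hAm : ∀ T : Finset X, T.card = m → AntipodalOn d T) {S : Finset X} (hS : m ≤ S.card) :
    AntipodalOn d S := by
  classical
  intro a ha
  obtain ⟨x, hx, y, hy, hxy⟩ := exists_dist_eq_diamS d ⟨a, ha⟩
  have hsub : ({a, x, y} : Finset X) ⊆ S := by
    simp only [Finset.insert_subset_iff, Finset.singleton_subset_iff]
    exact ⟨ha, hx, hy⟩
  have hcard : ({a, x, y} : Finset X).card ≤ m := Finset.card_le_three.trans hm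
  obtain ⟨T, haxyT, hTS, hTm⟩ := Finset.exists_subsuperset_card_eq hsub hcard hS
  have hdiam : diamS d T = diamS d S :=
    diamS_eq_of_subset_of_dist_eq d hTS (haxyT (by simp)) (haxyT (by simp)) hxy
  obtain ⟨b, hbT, hab⟩ := hAm T hTm a (haxyT (by simp))
  exact ⟨b, hTS hbT, hab.trans hdiam⟩

theorem Am_implies_An_general {X : Type*} [Fintype X]
    (d : X → X → ℝ) (m : ℕ) (hm : 3 ≤ m)
    (hAm : ∀ S : Finset X, S.card = m → AntipodalOn d S) :
    (∀ n, m ≤ n → ∀ S : Finset X, S.card = n → AntipodalOn d S) ∧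
      (m ≤ Fintype.card X → AntipodalOn d Finset.univ) :=
  ⟨fun _ hn _ hS => antipodalOn_of_card_le hm hAm (hS ▸ hn),
    fun hX => antipodalOn_of_card_le hm hAm (by rwa [Finset.card_univ])⟩

theorem Am_implies_An {X : Type*} [Fintype X] [DecidableEq X]
    (d : X → X → ℝ) (hd : IsMetric d) (m : ℕ) (hm : 3 ≤ m)
    (hAm : ∀ S : Finset X, S.card = m → AntipodalOn d S) :
    (∀ n, m ≤ n → ∀ S : Finset X, S.card = n → AntipodalOn d S) ∧
      (m ≤ Fintype.card X → AntipodalOn d Finset.univ) :=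
  Am_implies_An_general d m hm hAm
end
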